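/- Let G be a graph and k ≥ 1, s ∈ [k]. Define the (k,s)-tuple graph T with vertex set the set of k-tuples of V(G) inducing at most s connected components, edges between tuples that are local j-neighbors of each other, edge label j, and node labels given by isomorphism types. Then for all i ≥ 0 and all (k,s)-tuples t, u: the (k,s)-LWL colorings satisfy C_i(t) = C_i(u) if and only if the edge-labeled 1-WL colorings of the corresponding nodes in T agree after i iterations. -/

import Mathlib

/-! Induction on the number of rounds. Two colorings that induce the same partition of the
tuples map equal multisets to equal multisets, so the hypothesis for round `i` transfers to
the neighbor multisets of round `i + 1`. A multiset of (color, label) pairs is determined by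
its fibers over the labels, and the fiber over `j` of the tuple-graph neighborhood of `v` is
the multiset of colors of the local `j`-neighbors of `v`: this is exactly the `j`-th component
of the LWL refinement.
-/

open SimpleGraph Function
open scoped Classical

noncomputable section

variable {V : Type*} [Fintype V]

/-- A `k`-tuple is a `(k,s)`-tuple if it induces a subgraph with at most `s`
connected components. -/
def IsKS (G : SimpleGraph V) (k s : ℕ) (v : Fin k → V) : Prop :=
  Nat.card (G.induce (Set.range v)).ConnectedComponent ≤ s

/-- The atomic (isomorphism) type of a `k`-tuple: which entries coincide and which are
adjacent. -/
def atp (G : SimpleGraph V) (k : ℕ) (v : Fin k → V) : Fin k → Fin k → Prop × Prop :=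
  fun i j => (v i = v j, G.Adj (v i) (v j))

/-- Colors of the `(k,s)`-LWL after `i` rounds: initially an atomic type, then the
previous color together with, for each `j ∈ [k]`, the multiset of previous colors of
local `j`-neighbors. -/
def LWLColor (k : ℕ) : ℕ → Type _
  | 0 => Fin k → Fin k → Prop × Prop
  | i + 1 => LWLColor k i × (Fin k → Multiset (LWLColor k i))

/-- The `(k,s)`-LWL coloring after `i` rounds: refine by the multisets of colors of the
local `j`-neighbors which are themselves `(k,s)`-tuples. -/
def lwl (G : SimpleGraph V) (k s : ℕ) : (i : ℕ) → (Fin k → V) → LWLColor k i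
  | 0, v => atp G k v
  | i + 1, v =>
    (lwl G k s i v, fun j =>
      ((Finset.univ.filter fun x : V =>
          G.Adj (v j) x ∧ IsKS G k s (Function.update v j x)).val.map
        fun x => lwl G k s i (Function.update v j x)))

/-- Colors of the edge-labeled 1-WL on the `(k,s)`-tuple graph after `i` rounds:
initially the node label (an atomic type), then the previous color together with the
multiset of pairs (previous color of a neighbor, label `j` of the connecting edge). -/
def TupleGraphColor (k : ℕ) : ℕ → Type _
  | 0 => Fin k → Fin k → Prop × Prop
  | i + 1 => TupleGraphColor k i × Multiset (TupleGraphColor k i × Fin k)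

/-- The edge-labeled 1-WL coloring on the `(k,s)`-tuple graph after `i` rounds: the
neighbors of the node corresponding to a `(k,s)`-tuple `v` are the local `j`-neighbors
of `v` that are `(k,s)`-tuples, joined by an edge labeled `j`. -/
def twl (G : SimpleGraph V) (k s : ℕ) : (i : ℕ) → (Fin k → V) → TupleGraphColor k i
  | 0, v => atp G k v
  | i + 1, v =>
    (twl G k s i v,
      ((Finset.univ.filter fun p : Fin k × V =>
          G.Adj (v p.1) p.2 ∧ IsKS G k s (Function.update v p.1 p.2)).val.map
        fun p => (twl G k s i (Function.update v p.1 p.2), p.1)))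

theorem Multiset.map_eq_map_iff_of_forall_eq_iff {α β γ : Type*} {f : α → β} {g : α → γ}
    (h : ∀ a b, f a = f b ↔ g a = g b) (s t : Multiset α) :
    s.map f = t.map f ↔ s.map g = t.map g := by
  simp only [← Multiset.rel_eq, Multiset.rel_map]
  exact ⟨fun r => r.mono fun a _ b _ => (h a b).1, fun r => r.mono fun a _ b _ => (h a b).2⟩

theorem Multiset.eq_iff_forall_map_fst_filter_snd_eq {β ι : Type*} [DecidableEq ι]
    {m m' : Multiset (β × ι)} :
    m = m' ↔ ∀ j, (m.filter (·.2 = j)).map Prod.fst = (m'.filter (·.2 = j)).map Prod.fst := by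
  have fiber_eq (n : Multiset (β × ι)) (j : ι) :
      n.filter (·.2 = j) = ((n.filter (·.2 = j)).map Prod.fst).map (·, j) := by
    rw [Multiset.map_map]
    conv_lhs => rw [← Multiset.map_id (n.filter _)]
    exact Multiset.map_congr rfl fun p hp => Prod.ext rfl (Multiset.mem_filter.1 hp).2
  refine ⟨fun h _ => h ▸ rfl, fun h => Multiset.ext.2 fun p => ?_⟩
  rw [← Multiset.count_filter_of_pos (p := (·.2 = p.2)) rfl,
    ← Multiset.count_filter_of_pos (s := m') (p := (·.2 = p.2)) rfl,
    fiber_eq m, fiber_eq m', h]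

section TupleGraph

variable (G : SimpleGraph V) (k s : ℕ)

def localNeighbors (v : Fin k → V) (j : Fin k) : Finset V :=
  Finset.univ.filter fun x => G.Adj (v j) x ∧ IsKS G k s (update v j x)

def tupleGraphNeighbors (v : Fin k → V) : Finset (Fin k × V) :=
  Finset.univ.filter fun p => G.Adj (v p.1) p.2 ∧ IsKS G k s (update v p.1 p.2)

theorem tupleGraphNeighbors_filter_fst_eq (v : Fin k → V) (j : Fin k) :
    (tupleGraphNeighbors G k s v).filter (·.1 = j)
      = (localNeighbors G k s v j).map (Embedding.sectR j V) := by
  ext ⟨j', x⟩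
  simp only [tupleGraphNeighbors, localNeighbors, Finset.mem_filter, Finset.mem_map,
    Finset.mem_univ, true_and, Embedding.sectR_apply, Prod.mk.injEq]
  constructor
  · rintro ⟨hx, rfl⟩
    exact ⟨x, hx, rfl, rfl⟩
  · rintro ⟨x, hx, rfl, rfl⟩
    exact ⟨hx, rfl⟩

theorem lwl_succ_eq_iff (i : ℕ) (t u : Fin k → V) :
    lwl G k s (i + 1) t = lwl G k s (i + 1) u ↔ lwl G k s i t = lwl G k s i u ∧
      ∀ j, (localNeighbors G k s t j).val.map (lwl G k s i ∘ update t j)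
        = (localNeighbors G k s u j).val.map (lwl G k s i ∘ update u j) :=
  Prod.ext_iff.trans (and_congr_right' funext_iff)

theorem twl_succ_eq_iff (i : ℕ) (t u : Fin k → V) :
    twl G k s (i + 1) t = twl G k s (i + 1) u ↔ twl G k s i t = twl G k s i u ∧
      (tupleGraphNeighbors G k s t).val.map (fun p => (twl G k s i (update t p.1 p.2), p.1))
        = (tupleGraphNeighbors G k s u).val.map
            fun p => (twl G k s i (update u p.1 p.2), p.1) :=
  Prod.ext_iff

theorem map_fst_filter_snd_twl_succ (i : ℕ) (v : Fin k → V) (j : Fin k) :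
    (((tupleGraphNeighbors G k s v).val.map
        fun p => (twl G k s i (update v p.1 p.2), p.1)).filter (·.2 = j)).map Prod.fst
      = (localNeighbors G k s v j).val.map (twl G k s i ∘ update v j) := by
  rw [Multiset.filter_map, Multiset.map_map]
  change ((tupleGraphNeighbors G k s v).val.filter (·.1 = j)).map _ = _
  rw [← Finset.filter_val, tupleGraphNeighbors_filter_fst_eq, Finset.map_val, Multiset.map_map]
  rfl

end TupleGraph

theorem lwl_iff_tupleGraph_wl_general (G : SimpleGraph V) (k s : ℕ)
    (i : ℕ) (t u : Fin k → V) :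
    lwl G k s i t = lwl G k s i u ↔ twl G k s i t = twl G k s i u := by
  induction i generalizing t u with
  | zero => rfl
  | succ i ih =>
    have neighbors_iff (j : Fin k) :
        (localNeighbors G k s t j).val.map (lwl G k s i ∘ update t j)
            = (localNeighbors G k s u j).val.map (lwl G k s i ∘ update u j) ↔
          (localNeighbors G k s t j).val.map (twl G k s i ∘ update t j)
            = (localNeighbors G k s u j).val.map (twl G k s i ∘ update u j) := by
      simp only [← Multiset.map_map]
      exact Multiset.map_eq_map_iff_of_forall_eq_iff ih _ _
    rw [lwl_succ_eq_iff, twl_succ_eq_iff, ih, Multiset.eq_iff_forall_map_fst_filter_snd_eq]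
    simp only [map_fst_filter_snd_twl_succ, neighbors_iff]

/-- For every graph `G`, `k ≥ 1` and `s ∈ [k]`, and all `(k,s)`-tuples
`t` and `u`: the `(k,s)`-LWL colors of `t` and `u` after `i` rounds agree if and only if
the edge-labeled 1-WL colors of the corresponding nodes of the `(k,s)`-tuple graph agree
after `i` rounds. -/
theorem lwl_iff_tupleGraph_wl (G : SimpleGraph V) (k s : ℕ)
    (hk : 1 ≤ k) (hs1 : 1 ≤ s) (hsk : s ≤ k)
    (i : ℕ) (t u : Fin k → V) (ht : IsKS G k s t) (hu : IsKS G k s u) :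
    lwl G k s i t = lwl G k s i u ↔ twl G k s i t = twl G k s i u :=
  lwl_iff_tupleGraph_wl_general G k s i t u

end
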